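/- Let α > 0, let a, b : {1, 2, 3, …} → {0, 1} be binary digit sequences, and let N₀ ≥ 2 be such that a_n = b_n for all 1 ≤ n ≤ N₀ − 1. Then the telescoping identity Σ_{n=1}^{N₀−1} u_n / sinh(α·2^(−n+1)) = v_1 / sinh(α) − v_{N₀} / sinh(α·2^(−N₀+1)) holds. -/

import Mathlib

/-- The tail sum `Σ_{i=n}^∞ a_i·2^(−i)` of a binary digit sequence `a` (digits `a i ∈ {0,1}`). -/
noncomputable def binTail (a : ℕ → ℕ) (n : ℕ) : ℝ :=
  ∑' i : ℕ, (a (n + i) : ℝ) * 2 ^ (-((n : ℤ) + (i : ℤ)))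

/-- `v_n = sinh(α·Σ_{i=n}^∞ a_i·2^(−i))·sinh(α·Σ_{i=n}^∞ (1 − b_i)·2^(−i))`. -/
noncomputable def vSeq (α : ℝ) (a b : ℕ → ℕ) (n : ℕ) : ℝ :=
  Real.sinh (α * binTail a n) * Real.sinh (α * binTail (fun i => 1 - b i) n)

/-- `u_n = sinh(α·Σ_{i=n+1}^∞ a_i·2^(−i))·sinh(α·Σ_{i=n+1}^∞ b_i·2^(−i))` when `a_n = b_n = 0`,
`u_n = sinh(α·Σ_{i=n+1}^∞ (1−a_i)·2^(−i))·sinh(α·Σ_{i=n+1}^∞ (1−b_i)·2^(−i))` when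
`a_n = b_n = 1` (only used when `a_n = b_n`). -/
noncomputable def uSeq (α : ℝ) (a b : ℕ → ℕ) (n : ℕ) : ℝ :=
  if a n = 0 then
    Real.sinh (α * binTail a (n + 1)) * Real.sinh (α * binTail b (n + 1))
  else
    Real.sinh (α * binTail (fun i => 1 - a i) (n + 1)) *
      Real.sinh (α * binTail (fun i => 1 - b i) (n + 1))

/-!
Write `s = α·2^(-n)`. When `a_n = b_n`, the digit `n` contributes either nothing or `2^(-n)` to
each of the two tails in `v_n`, and `Σ_{i>n} c_i 2^(-i) + Σ_{i>n} (1 - c_i) 2^(-i) = 2^(-n)`. So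
`u_n`, `v_n`, `v_{n+1}` are `sinh X · sinh x`, `sinh X · sinh (2s - x)`, `sinh X · sinh (s - x)` up
to the order of the factors, and the hyperbolic identity
`sinh x / sinh 2s = sinh (2s - x) / sinh 2s - sinh (s - x) / sinh s`
gives `u_n / sinh 2s = v_n / sinh 2s - v_{n+1} / sinh s`. Summing over `n` telescopes.
-/

open Real

lemma Real.sinh_div_sinh_two_mul {s : ℝ} (hs : s ≠ 0) (x : ℝ) :
    sinh x / sinh (2 * s) = sinh (2 * s - x) / sinh (2 * s) - sinh (s - x) / sinh s := by
  have hsinh : sinh s ≠ 0 := sinh_ne_zero.mpr hs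
  have hsinh2 : sinh (2 * s) ≠ 0 := sinh_ne_zero.mpr (mul_ne_zero two_ne_zero hs)
  field_simp
  rw [sinh_sub, sinh_sub, sinh_two_mul, cosh_two_mul]
  linear_combination (-(sinh x * sinh s)) * cosh_sq_sub_sinh_sq s

lemma two_zpow_neg_add (n i : ℕ) :
    (2 : ℝ) ^ (-((n : ℤ) + (i : ℤ))) = 2 ^ (-(n : ℤ)) * 2⁻¹ ^ i := by
  rw [neg_add, zpow_add₀ two_ne_zero, zpow_neg (2 : ℝ) (i : ℤ), zpow_natCast, inv_pow]

lemma two_zpow_neg_succ_add_one (n : ℕ) : (2 : ℝ) ^ (-((n + 1 : ℕ) : ℤ) + 1) = 2 ^ (-(n : ℤ)) := by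
  push_cast
  ring_nf

namespace binTail

variable {c : ℕ → ℕ}

lemma summable (hc : ∀ i, c i ≤ 1) (n : ℕ) :
    Summable fun i : ℕ => (c (n + i) : ℝ) * 2 ^ (-((n : ℤ) + (i : ℤ))) := by
  refine Summable.of_nonneg_of_le (fun i => by positivity) (fun i => ?_)
    ((summable_geometric_of_lt_one (r := (2 : ℝ)⁻¹) (by norm_num) (by norm_num)).mul_left
      ((2 : ℝ) ^ (-(n : ℤ))))
  rw [two_zpow_neg_add]
  exact mul_le_of_le_one_left (by positivity) (by exact_mod_cast hc (n + i))

lemma eq_add_succ (hc : ∀ i, c i ≤ 1) (n : ℕ) :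
    binTail c n = c n * 2 ^ (-(n : ℤ)) + binTail c (n + 1) := by
  rw [binTail, (summable hc n).tsum_eq_zero_add, binTail]
  congr 1
  refine tsum_congr fun i => ?_
  rw [show n + (i + 1) = n + 1 + i by omega]
  push_cast
  ring_nf

lemma add_compl (hc : ∀ i, c i ≤ 1) (n : ℕ) :
    binTail c n + binTail (fun i => 1 - c i) n = 2 ^ (-(n : ℤ) + 1) := by
  have hterm (i : ℕ) : ((c (n + i) : ℕ) : ℝ) + ((1 - c (n + i) : ℕ) : ℝ) = 1 := by
    rw [Nat.cast_sub (hc (n + i))]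
    ring
  rw [binTail, binTail, ← (summable hc n).tsum_add (summable (fun i => Nat.sub_le 1 (c i)) n)]
  simp_rw [← add_mul, hterm, one_mul, two_zpow_neg_add]
  rw [tsum_mul_left, tsum_geometric_inv_two, zpow_add_one₀ two_ne_zero]

lemma eq_sub_compl (hc : ∀ i, c i ≤ 1) (n : ℕ) :
    binTail c n = 2 ^ (-(n : ℤ) + 1) - binTail (fun i => 1 - c i) n := by
  linarith [add_compl hc n]

lemma compl_eq_sub (hc : ∀ i, c i ≤ 1) (n : ℕ) :
    binTail (fun i => 1 - c i) n = 2 ^ (-(n : ℤ) + 1) - binTail c n := by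
  linarith [add_compl hc n]

lemma eq_succ_of_eq_zero (hc : ∀ i, c i ≤ 1) {n : ℕ} (hn : c n = 0) :
    binTail c n = binTail c (n + 1) := by
  simp [eq_add_succ hc n, hn]

end binTail

lemma uSeq_div_eq_sub {α : ℝ} (hα : α ≠ 0) {a b : ℕ → ℕ} (ha : ∀ i, a i ≤ 1)
    (hb : ∀ i, b i ≤ 1) {n : ℕ} (hn : a n = b n) :
    uSeq α a b n / sinh (α * 2 ^ (-(n : ℤ) + 1)) =
      vSeq α a b n / sinh (α * 2 ^ (-(n : ℤ) + 1)) -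
        vSeq α a b (n + 1) / sinh (α * 2 ^ (-((n + 1 : ℕ) : ℤ) + 1)) := by
  set s := α * 2 ^ (-(n : ℤ))
  have hs : s ≠ 0 := mul_ne_zero hα (zpow_ne_zero _ two_ne_zero)
  have h2s : α * 2 ^ (-(n : ℤ) + 1) = 2 * s := by rw [zpow_add_one₀ two_ne_zero]; ring
  rw [h2s, two_zpow_neg_succ_add_one]
  rcases Nat.le_one_iff_eq_zero_or_eq_one.mp (ha n) with h0 | h1
  · have hv : vSeq α a b n =
        sinh (α * binTail a (n + 1)) * sinh (2 * s - α * binTail b (n + 1)) := by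
      rw [vSeq, binTail.eq_succ_of_eq_zero ha h0, binTail.compl_eq_sub hb,
        binTail.eq_succ_of_eq_zero hb (hn ▸ h0), mul_sub, h2s]
    have hv' : vSeq α a b (n + 1) =
        sinh (α * binTail a (n + 1)) * sinh (s - α * binTail b (n + 1)) := by
      rw [vSeq, binTail.compl_eq_sub hb, two_zpow_neg_succ_add_one, mul_sub]
    rw [uSeq, if_pos h0, hv, hv', mul_div_assoc, mul_div_assoc, mul_div_assoc, ← mul_sub,
      sinh_div_sinh_two_mul hs]
  · have hv : vSeq α a b n =
        sinh (2 * s - α * binTail (fun i => 1 - a i) (n + 1)) *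
          sinh (α * binTail (fun i => 1 - b i) (n + 1)) := by
      rw [vSeq, binTail.eq_sub_compl ha, binTail.eq_succ_of_eq_zero (fun i => Nat.sub_le 1 (a i))
        (by omega), binTail.eq_succ_of_eq_zero (fun i => Nat.sub_le 1 (b i)) (by omega), mul_sub,
        h2s]
    have hv' : vSeq α a b (n + 1) =
        sinh (s - α * binTail (fun i => 1 - a i) (n + 1)) *
          sinh (α * binTail (fun i => 1 - b i) (n + 1)) := by
      rw [vSeq, binTail.eq_sub_compl ha, two_zpow_neg_succ_add_one, mul_sub]
    rw [uSeq, if_neg (by omega), hv, hv', mul_div_right_comm, mul_div_right_comm,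
      mul_div_right_comm, ← sub_mul, sinh_div_sinh_two_mul hs]

/-- If `a_n = b_n` for all `1 ≤ n ≤ N₀ − 1` (with `N₀ ≥ 2`), then the telescoping identity
`Σ_{n=1}^{N₀−1} u_n / sinh(α·2^(−n+1)) = v_1 / sinh(α) − v_{N₀} / sinh(α·2^(−N₀+1))` holds. -/
theorem u_telescoping (α : ℝ) (hα : 0 < α) (a b : ℕ → ℕ)
    (ha : ∀ i, a i ≤ 1) (hb : ∀ i, b i ≤ 1) (N₀ : ℕ) (hN₀ : 2 ≤ N₀)
    (hab : ∀ n, 1 ≤ n → n ≤ N₀ - 1 → a n = b n) :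
    ∑ n ∈ Finset.Icc 1 (N₀ - 1), uSeq α a b n / Real.sinh (α * 2 ^ (-(n : ℤ) + 1)) =
      vSeq α a b 1 / Real.sinh α - vSeq α a b N₀ / Real.sinh (α * 2 ^ (-(N₀ : ℤ) + 1)) := by
  set f : ℕ → ℝ := fun n => -(vSeq α a b n / sinh (α * 2 ^ (-(n : ℤ) + 1)))
  have hstep : ∀ n ∈ Finset.Icc 1 (N₀ - 1),
      uSeq α a b n / sinh (α * 2 ^ (-(n : ℤ) + 1)) = f (n + 1) - f n := fun n hn => by
    rw [Finset.mem_Icc] at hn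
    rw [uSeq_div_eq_sub hα.ne' ha hb (hab n hn.1 hn.2)]
    ring
  rw [Finset.sum_congr rfl hstep, Finset.sum_Icc_sub (by omega), Nat.sub_add_cancel (by omega)]
  simp only [f, Nat.cast_one, neg_add_cancel, zpow_zero, mul_one]
  ring
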